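/- Let α and γ be finite Borel measures on ℝ^d with equal total masses and let π be an optimal coupling realizing the Wasserstein distance W(α, γ) with cost min(|x−y|,1). Let f be a measurable function with 0 ≤ f(y) ≤ 1 for all y, set γ̄ = f·γ, define π̄(dx,dy) = f(y)π(dx,dy), and let ᾱ(·) = ‖α‖·∫π̄(·,dy). Then W(α, γ) = W(α − ᾱ, γ − γ̄) + W(ᾱ, γ̄). -/
import Mathlib


open MeasureTheory

/-- Wasserstein-type distance with bounded cost `min (dist x y) 1` between
finite measures of equal total mass, as an infimum over couplings. -/
noncomputable def Wdist {X : Type*} [MeasurableSpace X] [PseudoMetricSpace X]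
    (α γ : Measure X) : ℝ :=
  sInf {c : ℝ | ∃ π : Measure (X × X),
    π.map Prod.fst = α ∧ π.map Prod.snd = γ ∧
    c = ∫ p, min (dist p.1 p.2) 1 ∂π}

section aux
variable {X : Type*} [MeasurableSpace X] [PseudoMetricSpace X] [OpensMeasurableSpace X]
  [SecondCountableTopology X]

lemma cost_integrable (μ : Measure ((EuclideanSpace ℝ (Fin d)) × (EuclideanSpace ℝ (Fin d)))) [IsFiniteMeasure μ] :
    Integrable (fun p : (EuclideanSpace ℝ (Fin d)) × (EuclideanSpace ℝ (Fin d)) => min (dist p.1 p.2) 1) μ := by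
  refine (integrable_const (1:ℝ)).mono'
    ((continuous_dist.comp (continuous_fst.prodMk continuous_snd)).min
      continuous_const).aestronglyMeasurable (ae_of_all _ fun p => ?_)
  rw [Real.norm_eq_abs, abs_of_nonneg (le_min dist_nonneg zero_le_one)]
  exact min_le_right _ _

omit [OpensMeasurableSpace X] [SecondCountableTopology X] in
lemma Wdist_bddBelow (α γ : Measure X) :
    BddBelow {c : ℝ | ∃ π : Measure (X × X),
      π.map Prod.fst = α ∧ π.map Prod.snd = γ ∧
      c = ∫ p, min (dist p.1 p.2) 1 ∂π} := by
  refine ⟨0, fun c hc => ?_⟩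
  obtain ⟨σ, -, -, rfl⟩ := hc
  exact integral_nonneg fun p => le_min dist_nonneg zero_le_one

omit [PseudoMetricSpace X] [OpensMeasurableSpace X] [SecondCountableTopology X] in
lemma coupling_finite {Y : Type*} [MeasurableSpace Y] {σ : Measure (X × Y)} {μ : Measure X} [IsFiniteMeasure μ]
    (h : σ.map Prod.fst = μ) : IsFiniteMeasure σ := by
  constructor
  have : σ Set.univ = σ.map Prod.fst Set.univ := by
    rw [Measure.map_apply measurable_fst MeasurableSet.univ, Set.preimage_univ]
  rw [this, h]
  exact measure_lt_top μ _

end aux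

/-- Splitting of an optimal coupling along a density `f` of a submeasure of `γ`:
`W(α, γ) = W(α − ᾱ, γ − γ̄) + W(ᾱ, γ̄)` where `γ̄ = f·γ`, `π̄ = f(y)·π`, and
`ᾱ` is the first marginal of `π̄`. -/
theorem stmt1 {d : ℕ} (α γ : Measure (EuclideanSpace ℝ (Fin d)))
    [IsFiniteMeasure α] [IsFiniteMeasure γ]
    (hmass : α Set.univ = γ Set.univ)
    (π : Measure ((EuclideanSpace ℝ (Fin d)) × (EuclideanSpace ℝ (Fin d))))
    (hfst : π.map Prod.fst = α) (hsnd : π.map Prod.snd = γ)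
    (hopt : ∫ p, min (dist p.1 p.2) 1 ∂π = Wdist α γ)
    (f : EuclideanSpace ℝ (Fin d) → ℝ) (hf : Measurable f)
    (hf0 : ∀ y, 0 ≤ f y) (hf1 : ∀ y, f y ≤ 1) :
    Wdist α γ =
      Wdist (α - (π.withDensity (fun p => ENNReal.ofReal (f p.2))).map Prod.fst)
            (γ - γ.withDensity (fun y => ENNReal.ofReal (f y)))
      + Wdist ((π.withDensity (fun p => ENNReal.ofReal (f p.2))).map Prod.fst)
              (γ.withDensity (fun y => ENNReal.ofReal (f y))) := by
  have hmg : Measurable fun p : (EuclideanSpace ℝ (Fin d)) × (EuclideanSpace ℝ (Fin d)) => ENNReal.ofReal (f p.2) :=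
    ENNReal.measurable_ofReal.comp (hf.comp measurable_snd)
  have hmg1 : Measurable fun y : EuclideanSpace ℝ (Fin d) => ENNReal.ofReal (f y) :=
    ENNReal.measurable_ofReal.comp hf
  set πb := π.withDensity (fun p => ENNReal.ofReal (f p.2)) with hπb
  set γb := γ.withDensity (fun y => ENNReal.ofReal (f y)) with hγb
  set αb := πb.map Prod.fst with hαb
  haveI hπfin : IsFiniteMeasure π := coupling_finite hfst
  -- πb ≤ π
  have hπble : πb ≤ π := by
    rw [Measure.le_iff]
    intro s hs
    rw [hπb, withDensity_apply _ hs]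
    calc ∫⁻ p in s, ENNReal.ofReal (f p.2) ∂π ≤ ∫⁻ _ in s, 1 ∂π :=
          lintegral_mono fun p => ENNReal.ofReal_le_one.mpr (hf1 _)
      _ = π s := by simp
  have hγble : γb ≤ γ := by
    rw [Measure.le_iff]
    intro s hs
    rw [hγb, withDensity_apply _ hs]
    calc ∫⁻ y in s, ENNReal.ofReal (f y) ∂γ ≤ ∫⁻ _ in s, 1 ∂γ :=
          lintegral_mono fun y => ENNReal.ofReal_le_one.mpr (hf1 _)
      _ = γ s := by simp
  haveI : IsFiniteMeasure πb := ⟨lt_of_le_of_lt (hπble _) (measure_lt_top π _)⟩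
  haveI : IsFiniteMeasure γb := ⟨lt_of_le_of_lt (hγble _) (measure_lt_top γ _)⟩
  have hαble : αb ≤ α := by
    rw [hαb, ← hfst]; exact Measure.map_mono hπble measurable_fst
  have hsplit : π - πb + πb = π := Measure.sub_add_cancel_of_le hπble
  -- marginals of πb
  have hπbsnd : πb.map Prod.snd = γb := by
    ext s hs
    rw [Measure.map_apply measurable_snd hs, hπb,
      withDensity_apply _ (measurable_snd hs), hγb, withDensity_apply _ hs, ← hsnd,
      setLIntegral_map hs hmg1 measurable_snd]
  have hπbfst : πb.map Prod.fst = αb := rfl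
  -- marginals of π - πb
  have hsub_fst : (π - πb).map Prod.fst = α - αb := by
    have hadd : (π - πb).map Prod.fst + αb = α := by
      rw [hαb, ← Measure.map_add _ _ measurable_fst, hsplit, hfst]
    rw [← hadd, Measure.add_sub_cancel]
  have hsub_snd : (π - πb).map Prod.snd = γ - γb := by
    have hadd : (π - πb).map Prod.snd + γb = γ := by
      rw [← hπbsnd, ← Measure.map_add _ _ measurable_snd, hsplit, hsnd]
    rw [← hadd, Measure.add_sub_cancel]
  set S := {c : ℝ | ∃ σ : Measure ((EuclideanSpace ℝ (Fin d)) × (EuclideanSpace ℝ (Fin d))),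
    σ.map Prod.fst = α ∧ σ.map Prod.snd = γ ∧
    c = ∫ p, min (dist p.1 p.2) 1 ∂σ} with hS
  set S₁ := {c : ℝ | ∃ σ : Measure ((EuclideanSpace ℝ (Fin d)) × (EuclideanSpace ℝ (Fin d))),
    σ.map Prod.fst = α - αb ∧ σ.map Prod.snd = γ - γb ∧
    c = ∫ p, min (dist p.1 p.2) 1 ∂σ} with hS₁
  set S₂ := {c : ℝ | ∃ σ : Measure ((EuclideanSpace ℝ (Fin d)) × (EuclideanSpace ℝ (Fin d))),
    σ.map Prod.fst = αb ∧ σ.map Prod.snd = γb ∧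
    c = ∫ p, min (dist p.1 p.2) 1 ∂σ} with hS₂
  have hW : Wdist α γ = sInf S := rfl
  have hW₁ : Wdist (α - αb) (γ - γb) = sInf S₁ := rfl
  have hW₂ : Wdist αb γb = sInf S₂ := rfl
  have hne₁ : S₁.Nonempty := ⟨_, π - πb, hsub_fst, hsub_snd, rfl⟩
  have hne₂ : S₂.Nonempty := ⟨_, πb, hπbfst, hπbsnd, rfl⟩
  have hbdd : BddBelow S := Wdist_bddBelow α γ
  have hbdd₁ : BddBelow S₁ := Wdist_bddBelow _ _
  have hbdd₂ : BddBelow S₂ := Wdist_bddBelow _ _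
  apply le_antisymm
  · -- Wdist α γ ≤ sInf S₁ + sInf S₂
    rw [hW, hW₁, hW₂]
    refine le_of_forall_pos_le_add fun ε hε => ?_
    obtain ⟨c₁, hc₁S, hc₁⟩ := Real.lt_sInf_add_pos hne₁ (half_pos hε)
    obtain ⟨c₂, hc₂S, hc₂⟩ := Real.lt_sInf_add_pos hne₂ (half_pos hε)
    obtain ⟨σ₁, hσ₁f, hσ₁s, rfl⟩ := hc₁S
    obtain ⟨σ₂, hσ₂f, hσ₂s, rfl⟩ := hc₂S
    haveI : IsFiniteMeasure σ₁ := coupling_finite hσ₁f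
    haveI : IsFiniteMeasure σ₂ := coupling_finite hσ₂f
    have hmem : (∫ p, min (dist p.1 p.2) 1 ∂σ₁) + (∫ p, min (dist p.1 p.2) 1 ∂σ₂) ∈ S := by
      refine ⟨σ₁ + σ₂, ?_, ?_, ?_⟩
      · rw [Measure.map_add _ _ measurable_fst, hσ₁f, hσ₂f,
          Measure.sub_add_cancel_of_le hαble]
      · rw [Measure.map_add _ _ measurable_snd, hσ₁s, hσ₂s,
          Measure.sub_add_cancel_of_le hγble]
      · rw [integral_add_measure (cost_integrable σ₁) (cost_integrable σ₂)]
    calc sInf S ≤ _ := csInf_le hbdd hmem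
      _ ≤ (sInf S₁ + ε / 2) + (sInf S₂ + ε / 2) := add_le_add hc₁.le hc₂.le
      _ = sInf S₁ + sInf S₂ + ε := by ring
  · -- sInf S₁ + sInf S₂ ≤ Wdist α γ
    rw [← hopt, hW₁, hW₂]
    have hdecomp : ∫ p, min (dist p.1 p.2) 1 ∂π
        = (∫ p, min (dist p.1 p.2) 1 ∂(π - πb)) + ∫ p, min (dist p.1 p.2) 1 ∂πb := by
      conv_lhs => rw [← hsplit]
      exact integral_add_measure (cost_integrable _) (cost_integrable _)
    rw [hdecomp]
    exact add_le_add (csInf_le hbdd₁ ⟨π - πb, hsub_fst, hsub_snd, rfl⟩)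
      (csInf_le hbdd₂ ⟨πb, hπbfst, hπbsnd, rfl⟩)
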